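/- Let U be a finite group equipped with a partial order ≤ on its underlying set, and let H be a subgroup of U. Define a relation ⪯ on the set H\U of right cosets of H by: Hu₁ ⪯ Hu₂ if and only if for every u ∈ Hu₂ there exists u' ∈ Hu₁ with u' ≤ u. Then ⪯ is a partial order on H\U (it is reflexive, transitive, and antisymmetric). -/

import Mathlib

/-!
Reflexivity and transitivity are inherited from `≤`. For antisymmetry, pick a minimal element of
the finite coset `Hu₂`; mutual domination forces it into `Hu₁`, and right cosets that meet coincide.
-/

open MulOpposite Pointwise

theorem Minimal.mem_of_forall_exists_le {α : Type*} [PartialOrder α] {s t : Set α} {m : α}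
    (hm : Minimal (· ∈ t) m) (hst : ∀ b ∈ t, ∃ a ∈ s, a ≤ b) (hts : ∀ a ∈ s, ∃ b ∈ t, b ≤ a) :
    m ∈ s := by
  obtain ⟨v, hv, hvm⟩ := hst m hm.prop
  obtain ⟨w, hw, hwv⟩ := hts v hv
  have hwm : w = m := hm.eq_of_le hw (hwv.trans hvm)
  rwa [le_antisymm hvm (hwm ▸ hwv)] at hv

theorem setOf_exists_mem_mul_eq {U : Type*} [Group U] (H : Subgroup U) (u : U) :
    {y : U | ∃ h ∈ H, y = h * u} = op u • (H : Set U) := by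
  ext y
  rw [mem_rightCoset_iff]
  constructor
  · rintro ⟨h, hh, rfl⟩
    simpa using hh
  · exact fun hy => ⟨y * u⁻¹, hy, by simp⟩

theorem rightCoset_eq_of_mem_of_mem {U : Type*} [Group U] (H : Subgroup U) {x y m : U}
    (hx : m ∈ op x • (H : Set U)) (hy : m ∈ op y • (H : Set U)) :
    op x • (H : Set U) = op y • (H : Set U) := by
  rw [mem_rightCoset_iff] at hx hy
  rw [rightCoset_eq_iff]
  simpa [mul_assoc] using H.mul_mem (H.inv_mem hy) hx

theorem stmt_13 (U : Type*) [Group U] [Fintype U] [PartialOrder U] (H : Subgroup U) :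
    let R : U → U → Prop := fun u₁ u₂ =>
      ∀ u ∈ {y : U | ∃ h ∈ H, y = h * u₂}, ∃ u' ∈ {y : U | ∃ h ∈ H, y = h * u₁}, u' ≤ u
    (∀ u : U, R u u) ∧
    (∀ u₁ u₂ u₃ : U, R u₁ u₂ → R u₂ u₃ → R u₁ u₃) ∧
    (∀ u₁ u₂ : U, R u₁ u₂ → R u₂ u₁ →
      {y : U | ∃ h ∈ H, y = h * u₁} = {y : U | ∃ h ∈ H, y = h * u₂}) := by
  intro R
  simp only [R, setOf_exists_mem_mul_eq]
  refine ⟨fun u v hv => ⟨v, hv, le_rfl⟩, fun u₁ u₂ u₃ h₁₂ h₂₃ u hu => ?_,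
    fun u₁ u₂ h₁₂ h₂₁ => ?_⟩
  · obtain ⟨v, hv, hvu⟩ := h₂₃ u hu
    obtain ⟨w, hw, hwv⟩ := h₁₂ v hv
    exact ⟨w, hw, hwv.trans hvu⟩
  · obtain ⟨m, hm⟩ := (Set.toFinite (op u₂ • (H : Set U))).exists_minimal
      ⟨u₂, mem_own_rightCoset H.toSubmonoid u₂⟩
    exact rightCoset_eq_of_mem_of_mem H (hm.mem_of_forall_exists_le h₁₂ h₂₁) hm.prop
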